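/- arXiv:2308.08007 — 3 statements merged into one kernel-verified Lean document; each statement's English description precedes it below -/
import Mathlib

section
/- For any real exponent p with 1 < p < 2 and any vectors ξ, η in ℝ^N with (ξ, η) ≠ (0, 0), one has (|ξ|^{p-2}ξ - |η|^{p-2}η)·(ξ - η) · (|ξ| + |η|)^{2-p} ≥ (p-1)|ξ - η|^2. -/
/-!
Write `A = ‖ξ‖`, `B = ‖η‖`, `t = ⟪ξ, η⟫`. After multiplying through by `(A + B) ^ (p - 2)` the
difference of its two sides is affine in `t ≤ A B`, with slope
`-(A ^ (p - 2) + B ^ (p - 2) - 2 (p - 1) (A + B) ^ (p - 2)) ≤ 0` when `A, B > 0` (and `t = A B = 0`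
otherwise), so it suffices to treat the extreme case `t = A B`. There it
becomes the one-dimensional inequality
`(p - 1) (A + B) ^ (p - 2) (A - B) ≤ A ^ (p - 1) - B ^ (p - 1)` for `B ≤ A`, which follows from the
tangent-line bound for the concave function `s ↦ s ^ (p - 1)` at `A` (Bernoulli's inequality).
-/

open Real

namespace Real

theorem rpow_le_rpow_add_mul_rpow_sub_one_mul_sub {q a b : ℝ} (hq0 : 0 ≤ q) (hq1 : q ≤ 1)
    (ha : 0 < a) (hb : 0 ≤ b) :
    b ^ q ≤ a ^ q + q * a ^ (q - 1) * (b - a) := by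
  have hbernoulli : (b / a) ^ q ≤ 1 + q * (b / a - 1) := by
    simpa using rpow_one_add_le_one_add_mul_self (s := b / a - 1)
      (by linarith [div_nonneg hb ha.le]) hq0 hq1
  have hscaled := mul_le_mul_of_nonneg_left hbernoulli (rpow_nonneg ha.le q)
  rw [div_rpow hb ha.le, mul_div_cancel₀ _ (rpow_pos_of_pos ha q).ne'] at hscaled
  calc b ^ q ≤ a ^ q * (1 + q * (b / a - 1)) := hscaled
    _ = a ^ q + q * a ^ (q - 1) * (b - a) := by
      rw [rpow_sub_one ha.ne']
      field_simp

theorem sub_one_mul_rpow_add_mul_sub_le_rpow_sub_rpow {p A B : ℝ} (hp1 : 1 ≤ p) (hp2 : p ≤ 2)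
    (hB : 0 ≤ B) (hBA : B ≤ A) :
    (p - 1) * (A + B) ^ (p - 2) * (A - B) ≤ A ^ (p - 1) - B ^ (p - 1) := by
  rcases hBA.lt_or_eq with hBA | rfl
  · have hA : 0 < A := hB.trans_lt hBA
    have htangent := rpow_le_rpow_add_mul_rpow_sub_one_mul_sub (q := p - 1) (by linarith)
      (by linarith) hA hB
    have hsum : (A + B) ^ (p - 2) ≤ A ^ (p - 2) :=
      rpow_le_rpow_of_nonpos hA (by linarith) (by linarith)
    rw [show p - 1 - 1 = p - 2 by ring] at htangent
    nlinarith [mul_le_mul_of_nonneg_left hsum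
      (mul_nonneg (sub_nonneg.2 hp1) (sub_nonneg.2 hBA.le))]
  · simp

theorem sub_one_mul_rpow_add_mul_sub_sq_le {p A B : ℝ} (hp1 : 1 ≤ p) (hp2 : p ≤ 2)
    (hA : 0 ≤ A) (hB : 0 ≤ B) :
    (p - 1) * (A + B) ^ (p - 2) * (A - B) ^ 2 ≤ (A - B) * (A ^ (p - 1) - B ^ (p - 1)) := by
  rcases le_total B A with hBA | hAB
  · have h := sub_one_mul_rpow_add_mul_sub_le_rpow_sub_rpow hp1 hp2 hB hBA
    nlinarith [mul_le_mul_of_nonneg_left h (sub_nonneg.2 hBA)]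
  · have h := sub_one_mul_rpow_add_mul_sub_le_rpow_sub_rpow hp1 hp2 hA hAB
    rw [add_comm B A] at h
    nlinarith [mul_le_mul_of_nonneg_left h (sub_nonneg.2 hAB)]

end Real

section InnerProductSpace

variable {E : Type*} [NormedAddCommGroup E] [InnerProductSpace ℝ E]

theorem sub_one_mul_rpow_add_mul_norm_sub_sq_le_inner {p : ℝ} (hp1 : 1 < p) (hp2 : p ≤ 2)
    (x y : E) :
    (p - 1) * (‖x‖ + ‖y‖) ^ (p - 2) * ‖x - y‖ ^ 2 ≤
      inner ℝ (‖x‖ ^ (p - 2) • x - ‖y‖ ^ (p - 2) • y) (x - y) := by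
  have hA := norm_nonneg x
  have hB := norm_nonneg y
  have hcross : 2 * (p - 1) * (‖x‖ + ‖y‖) ^ (p - 2) * (‖x‖ * ‖y‖ - inner ℝ x y) ≤
      (‖x‖ ^ (p - 2) + ‖y‖ ^ (p - 2)) * (‖x‖ * ‖y‖ - inner ℝ x y) := by
    rcases eq_or_ne x 0 with rfl | hx
    · simp
    rcases eq_or_ne y 0 with rfl | hy
    · simp
    refine mul_le_mul_of_nonneg_right ?_ (sub_nonneg.2 (real_inner_le_norm x y))
    have hxA : (‖x‖ + ‖y‖) ^ (p - 2) ≤ ‖x‖ ^ (p - 2) :=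
      rpow_le_rpow_of_nonpos (norm_pos_iff.2 hx) (by linarith) (by linarith)
    have hyB : (‖x‖ + ‖y‖) ^ (p - 2) ≤ ‖y‖ ^ (p - 2) :=
      rpow_le_rpow_of_nonpos (norm_pos_iff.2 hy) (by linarith) (by linarith)
    nlinarith [rpow_nonneg (add_nonneg hA hB) (p - 2)]
  have hdiag := sub_one_mul_rpow_add_mul_sub_sq_le hp1.le hp2 hA hB
  -- Also at `s = 0`, where `0 ^ (p - 2) = 0`, because `p ≠ 1`.
  have hpow : ∀ s : ℝ, 0 ≤ s → s ^ (p - 1) = s ^ (p - 2) * s := fun s hs => by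
    rw [← rpow_add_one' hs (by linarith)]
    ring_nf
  rw [hpow _ hA, hpow _ hB] at hdiag
  rw [norm_sub_sq_real]
  simp only [inner_sub_left, inner_sub_right, real_inner_smul_left,
    real_inner_self_eq_norm_sq, real_inner_comm x y]
  nlinarith [hcross, hdiag]

end InnerProductSpace

/-- Simon's inequality in the singular case `1 < p < 2` on `ℝ^N`.
Here `‖ξ‖ ^ (p - 2)` is real rpow, so `‖ξ‖ ^ (p-2) • ξ = 0` when `ξ = 0`. -/
theorem simon_inequality_p_lt_two (N : ℕ) (p : ℝ) (hp1 : 1 < p) (hp2 : p < 2)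
    (ξ η : EuclideanSpace ℝ (Fin N)) (hne : ¬(ξ = 0 ∧ η = 0)) :
    (p - 1) * ‖ξ - η‖ ^ 2 ≤
      (inner ℝ (‖ξ‖ ^ (p - 2) • ξ - ‖η‖ ^ (p - 2) • η) (ξ - η) : ℝ) *
        (‖ξ‖ + ‖η‖) ^ (2 - p) := by
  have hpos : 0 < ‖ξ‖ + ‖η‖ := by
    rcases not_and_or.1 hne with hξ | hη
    · exact add_pos_of_pos_of_nonneg (norm_pos_iff.2 hξ) (norm_nonneg η)
    · exact add_pos_of_nonneg_of_pos (norm_nonneg ξ) (norm_pos_iff.2 hη)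
  calc (p - 1) * ‖ξ - η‖ ^ 2
      = (p - 1) * (‖ξ‖ + ‖η‖) ^ (p - 2) * ‖ξ - η‖ ^ 2 * (‖ξ‖ + ‖η‖) ^ (2 - p) := by
        rw [mul_right_comm _ _ (‖ξ - η‖ ^ 2), mul_assoc _ (_ ^ (p - 2)), ← rpow_add hpos]
        simp
    _ ≤ _ := mul_le_mul_of_nonneg_right
        (sub_one_mul_rpow_add_mul_norm_sub_sq_le_inner hp1 hp2.le ξ η) (rpow_nonneg hpos.le _)
end

section
/- For any p ≥ 2 and real numbers a, b: (|a|^{p-2}a - |b|^{p-2}b)(a - b) ≥ (1/2^p)|a - b|^p. -/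
/-!
Write `φ x = |x| ^ (p - 2) * x`. By symmetry and oddness of `φ` one may assume `|b| ≤ a`.
Then `φ b ≤ a ^ (p - 2) * (a + b) / 2`, which turns into
`(φ a - φ b) * (a - b) ≥ a ^ (p - 2) * (a - b) ^ 2 / 2`, and `|a - b| ≤ 2 a` gives
`|a - b| ^ p ≤ 2 ^ (p - 1) * (φ a - φ b) * (a - b)`.
-/

open Real

lemma abs_rpow_mul_le_of_abs_le {r a b : ℝ} (hr : 0 ≤ r) (hb : |b| ≤ a) :
    |b| ^ r * b ≤ a ^ r * ((a + b) / 2) := by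
  have ha : 0 ≤ a := (abs_nonneg b).trans hb
  have hab : 0 ≤ a + b := by linarith [neg_abs_le b]
  rcases le_or_gt 0 b with hb0 | hb0
  · calc |b| ^ r * b ≤ a ^ r * b :=
          mul_le_mul_of_nonneg_right (rpow_le_rpow (abs_nonneg b) hb hr) hb0
      _ ≤ a ^ r * ((a + b) / 2) :=
          mul_le_mul_of_nonneg_left (by linarith [le_abs_self b]) (rpow_nonneg ha r)
  · calc |b| ^ r * b ≤ 0 := mul_nonpos_of_nonneg_of_nonpos (rpow_nonneg (abs_nonneg b) r) hb0.le
      _ ≤ a ^ r * ((a + b) / 2) := mul_nonneg (rpow_nonneg ha r) (by linarith)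

lemma abs_rpow_mul_sq_div_two_le {r a b : ℝ} (hr : 0 ≤ r) (hb : |b| ≤ |a|) :
    |a| ^ r * (a - b) ^ 2 / 2 ≤ (|a| ^ r * a - |b| ^ r * b) * (a - b) := by
  wlog ha : 0 ≤ a generalizing a b
  · have h := this (a := -a) (b := -b) (by simpa only [abs_neg] using hb) (by linarith)
    rw [abs_neg, abs_neg] at h
    linear_combination h
  rw [abs_of_nonneg ha] at hb ⊢
  have hba : 0 ≤ a - b := by linarith [le_abs_self b]
  linear_combination mul_nonneg hba (sub_nonneg.2 (abs_rpow_mul_le_of_abs_le hr hb))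

lemma abs_sub_rpow_le_of_abs_le {p a b : ℝ} (hp : 2 ≤ p) (hb : |b| ≤ |a|) :
    |a - b| ^ p ≤ 2 ^ (p - 1) * ((|a| ^ (p - 2) * a - |b| ^ (p - 2) * b) * (a - b)) := by
  have hsub : |a - b| ≤ 2 * |a| := by linarith [abs_sub a b]
  calc |a - b| ^ p = |a - b| ^ (p - 2) * (a - b) ^ 2 := by
        rw [← sq_abs, ← rpow_two, ← rpow_add' (abs_nonneg _) (by linarith), sub_add_cancel]
    _ ≤ (2 * |a|) ^ (p - 2) * (a - b) ^ 2 := by gcongr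
    _ = 2 ^ (p - 1) * (|a| ^ (p - 2) * (a - b) ^ 2 / 2) := by
        rw [mul_rpow zero_le_two (abs_nonneg a), show p - 2 = p - 1 - 1 by ring,
          rpow_sub_one two_ne_zero]
        ring
    _ ≤ 2 ^ (p - 1) * ((|a| ^ (p - 2) * a - |b| ^ (p - 2) * b) * (a - b)) := by
        gcongr
        exact abs_rpow_mul_sq_div_two_le (by linarith) hb

/-- One-dimensional Simon's inequality for `p ≥ 2`. -/
theorem simon_inequality_one_dim (p : ℝ) (hp : 2 ≤ p) (a b : ℝ) :
    (1 / 2 ^ p) * |a - b| ^ p ≤ (|a| ^ (p - 2) * a - |b| ^ (p - 2) * b) * (a - b) := by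
  wlog hb : |b| ≤ |a| generalizing a b
  · have h := this b a (le_of_not_ge hb)
    rw [abs_sub_comm]
    linear_combination h
  set D := (|a| ^ (p - 2) * a - |b| ^ (p - 2) * b) * (a - b)
  have hD : 0 ≤ D := le_trans (by positivity) (abs_rpow_mul_sq_div_two_le (by linarith) hb)
  calc 1 / 2 ^ p * |a - b| ^ p ≤ 1 / 2 ^ p * (2 ^ (p - 1) * D) := by
        gcongr; exact abs_sub_rpow_le_of_abs_le hp hb
    _ = D / 2 := by
        rw [rpow_sub_one two_ne_zero]
        field_simp
    _ ≤ D := by linarith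
end

section
/- Let (X, μ) be a measure space, p : X → ℝ measurable with 1 < p⁻ ≤ p(x) ≤ p⁺ ≤ 2 for a.e. x, and let h₁, h₂, h₃ ∈ L¹(X, μ) be nonnegative. Then ∫_X h₁^{p/2} (h₂^{(2−p)/2} + h₃^{(2−p)/2}) dμ ≤ C (‖h₁‖₁^{p⁺/2} + ‖h₁‖₁^{p⁻/2}) (‖h₂‖₁^{(2−p⁺)/2} + ‖h₂‖₁^{(2−p⁻)/2} + ‖h₃‖₁^{(2−p⁺)/2} + ‖h₃‖₁^{(2−p⁻)/2}) for some constant C depending only on p⁻, p⁺. -/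
/-!
Pointwise, Young's inequality with the weights `θ = p/2` and `1 - θ` gives
`h^θ k^(1-θ) ≤ a^θ b^(1-θ) (h/a + k/b)` for any `a, b > 0`. Since `θ` ranges in
`[p⁻/2, p⁺/2]`, `a^θ ≤ a^(p⁺/2) + a^(p⁻/2)` and likewise for `b^(1-θ)`, so integrating with
`a ≥ ‖h‖₁`, `b ≥ ‖k‖₁` bounds `∫ h^θ k^(1-θ)` by `2 (a^(p⁺/2) + a^(p⁻/2)) (b^… + b^…)`.
Letting `a ↓ ‖h‖₁`, `b ↓ ‖k‖₁` handles vanishing norms; the terms with `h₂` and `h₃`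
are estimated separately.
-/

open MeasureTheory Filter Topology

theorem Real.rpow_le_rpow_add_rpow_of_le_of_le {a t t₁ t₂ : ℝ} (ha : 0 < a) (h₁ : t₁ ≤ t)
    (h₂ : t ≤ t₂) : a ^ t ≤ a ^ t₂ + a ^ t₁ := by
  rcases le_total a 1 with h | h
  · calc a ^ t ≤ a ^ t₁ := Real.rpow_le_rpow_of_exponent_ge ha h h₁
      _ ≤ _ := le_add_of_nonneg_left (Real.rpow_nonneg ha.le _)
  · calc a ^ t ≤ a ^ t₂ := Real.rpow_le_rpow_of_exponent_le h h₂
      _ ≤ _ := le_add_of_nonneg_right (Real.rpow_nonneg ha.le _)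

theorem Real.rpow_mul_rpow_one_sub_le {x y a b t : ℝ} (hx : 0 ≤ x) (hy : 0 ≤ y) (ha : 0 < a)
    (hb : 0 < b) (ht₀ : 0 ≤ t) (ht₁ : t ≤ 1) :
    x ^ t * y ^ (1 - t) ≤ a ^ t * b ^ (1 - t) * (x / a + y / b) := by
  have hxa : 0 ≤ x / a := div_nonneg hx ha.le
  have hyb : 0 ≤ y / b := div_nonneg hy hb.le
  have young : (x / a) ^ t * (y / b) ^ (1 - t) ≤ x / a + y / b :=
    calc (x / a) ^ t * (y / b) ^ (1 - t) ≤ t * (x / a) + (1 - t) * (y / b) :=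
          Real.geom_mean_le_arith_mean2_weighted ht₀ (by linarith) hxa hyb (by ring)
      _ ≤ x / a + y / b := by nlinarith
  calc x ^ t * y ^ (1 - t)
      = a ^ t * b ^ (1 - t) * ((x / a) ^ t * (y / b) ^ (1 - t)) := by
        rw [Real.div_rpow hx ha.le, Real.div_rpow hy hb.le]
        field_simp [(Real.rpow_pos_of_pos ha t).ne', (Real.rpow_pos_of_pos hb (1 - t)).ne']
    _ ≤ a ^ t * b ^ (1 - t) * (x / a + y / b) := by gcongr

section

variable {X : Type*} [MeasurableSpace X] {μ : Measure X} {θ h k : X → ℝ} {θm θp : ℝ}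

theorem integrable_rpow_mul_rpow_one_sub (hθ : AEMeasurable θ μ)
    (hθ01 : ∀ᵐ x ∂μ, 0 ≤ θ x ∧ θ x ≤ 1) (hh : Integrable h μ) (hk : Integrable k μ)
    (hh0 : ∀ᵐ x ∂μ, 0 ≤ h x) (hk0 : ∀ᵐ x ∂μ, 0 ≤ k x) :
    Integrable (fun x => h x ^ θ x * k x ^ (1 - θ x)) μ := by
  refine (hh.add hk).mono' ?_ ?_
  · exact ((hh.aemeasurable.pow hθ).mul
      (hk.aemeasurable.pow (aemeasurable_const.sub hθ))).aestronglyMeasurable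
  · filter_upwards [hθ01, hh0, hk0] with x hx hhx hkx
    rw [Real.norm_of_nonneg (mul_nonneg (Real.rpow_nonneg hhx _) (Real.rpow_nonneg hkx _))]
    simpa using Real.rpow_mul_rpow_one_sub_le hhx hkx one_pos one_pos hx.1 hx.2

theorem integral_rpow_mul_rpow_one_sub_le_of_le {a b : ℝ} (ha : 0 < a) (hb : 0 < b)
    (hA : ∫ x, h x ∂μ ≤ a) (hB : ∫ x, k x ∂μ ≤ b) (hθm : 0 ≤ θm) (hθp : θp ≤ 1)
    (hθ : ∀ᵐ x ∂μ, θm ≤ θ x ∧ θ x ≤ θp) (hh : Integrable h μ) (hk : Integrable k μ)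
    (hh0 : ∀ᵐ x ∂μ, 0 ≤ h x) (hk0 : ∀ᵐ x ∂μ, 0 ≤ k x) :
    ∫ x, h x ^ θ x * k x ^ (1 - θ x) ∂μ ≤
      2 * (a ^ θp + a ^ θm) * (b ^ (1 - θp) + b ^ (1 - θm)) := by
  set Ta := a ^ θp + a ^ θm
  set Tb := b ^ (1 - θp) + b ^ (1 - θm)
  calc ∫ x, h x ^ θ x * k x ^ (1 - θ x) ∂μ ≤ ∫ x, Ta * Tb * (h x / a + k x / b) ∂μ := by
        refine integral_mono_of_nonneg ?_ (((hh.div_const a).add (hk.div_const b)).const_mul _) ?_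
        · filter_upwards [hh0, hk0] with x hhx hkx
          exact mul_nonneg (Real.rpow_nonneg hhx _) (Real.rpow_nonneg hkx _)
        · filter_upwards [hθ, hh0, hk0] with x hx hhx hkx
          calc h x ^ θ x * k x ^ (1 - θ x)
              ≤ a ^ θ x * b ^ (1 - θ x) * (h x / a + k x / b) :=
                Real.rpow_mul_rpow_one_sub_le hhx hkx ha hb (by linarith) (by linarith)
            _ ≤ Ta * Tb * (h x / a + k x / b) := by
                gcongr ?_ * ?_ * _
                · exact Real.rpow_le_rpow_add_rpow_of_le_of_le ha hx.1 hx.2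
                · exact (Real.rpow_le_rpow_add_rpow_of_le_of_le hb (by linarith)
                    (by linarith)).trans_eq (add_comm _ _)
    _ = Ta * Tb * ((∫ x, h x ∂μ) / a + (∫ x, k x ∂μ) / b) := by
        rw [integral_const_mul, integral_add (hh.div_const a) (hk.div_const b),
          integral_div, integral_div]
    _ ≤ Ta * Tb * (1 + 1) := by
        gcongr
        · exact (div_le_one ha).2 hA
        · exact (div_le_one hb).2 hB
    _ = 2 * Ta * Tb := by ring

theorem integral_rpow_mul_rpow_one_sub_le (hθm : 0 ≤ θm) (hθmp : θm ≤ θp) (hθp : θp ≤ 1)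
    (hθ : ∀ᵐ x ∂μ, θm ≤ θ x ∧ θ x ≤ θp) (hh : Integrable h μ) (hk : Integrable k μ)
    (hh0 : ∀ᵐ x ∂μ, 0 ≤ h x) (hk0 : ∀ᵐ x ∂μ, 0 ≤ k x) :
    ∫ x, h x ^ θ x * k x ^ (1 - θ x) ∂μ ≤
      2 * ((∫ x, h x ∂μ) ^ θp + (∫ x, h x ∂μ) ^ θm) *
        ((∫ x, k x ∂μ) ^ (1 - θp) + (∫ x, k x ∂μ) ^ (1 - θm)) := by
  set A := ∫ x, h x ∂μ
  set B := ∫ x, k x ∂μ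
  have hA : 0 ≤ A := integral_nonneg_of_ae hh0
  have hB : 0 ≤ B := integral_nonneg_of_ae hk0
  set F : ℝ → ℝ := fun ε =>
    2 * ((A + ε) ^ θp + (A + ε) ^ θm) * ((B + ε) ^ (1 - θp) + (B + ε) ^ (1 - θm))
  -- all exponents are nonnegative, so `F` is continuous down to `ε = 0`
  have hF : Continuous F := by
    have hpow : ∀ c q : ℝ, 0 ≤ q → Continuous fun ε : ℝ => (c + ε) ^ q := fun c q hq =>
      (continuous_const.add continuous_id).rpow_const fun _ => Or.inr hq
    exact (continuous_const.mul ((hpow A θp (by linarith)).add (hpow A θm hθm))).mul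
      ((hpow B _ (by linarith)).add (hpow B _ (by linarith)))
  have hlim : Tendsto F (𝓝[>] 0) (𝓝 (F 0)) := (hF.tendsto 0).mono_left nhdsWithin_le_nhds
  simp only [F, add_zero] at hlim
  refine ge_of_tendsto hlim ?_
  filter_upwards [self_mem_nhdsWithin] with ε (hε : 0 < ε)
  exact integral_rpow_mul_rpow_one_sub_le_of_le (by positivity) (by positivity)
    (by linarith) (by linarith) hθm hθp hθ hh hk hh0 hk0

end

/-- Variable-exponent Hölder estimate with conjugate pair `(2/p, 2/(2−p))`:
there is a constant `C` depending only on `p⁻, p⁺` bounding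
`∫ h₁^{p/2}(h₂^{(2−p)/2} + h₃^{(2−p)/2}) dμ` by powers of the `L¹` norms. -/
theorem variable_holder_s_plus_zero (pm pp : ℝ) (hpm : 1 < pm) (hpmpp : pm ≤ pp)
    (hpp2 : pp ≤ 2) :
    ∃ C : ℝ, 0 < C ∧
      ∀ (X : Type) (_ : MeasurableSpace X) (μ : Measure X) (p : X → ℝ),
        Measurable p → (∀ᵐ x ∂μ, pm ≤ p x ∧ p x ≤ pp) →
        ∀ h₁ h₂ h₃ : X → ℝ,
          Integrable h₁ μ → Integrable h₂ μ → Integrable h₃ μ →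
          (∀ᵐ x ∂μ, 0 ≤ h₁ x) → (∀ᵐ x ∂μ, 0 ≤ h₂ x) → (∀ᵐ x ∂μ, 0 ≤ h₃ x) →
          (∫ x, h₁ x ^ (p x / 2) *
              (h₂ x ^ ((2 - p x) / 2) + h₃ x ^ ((2 - p x) / 2)) ∂μ) ≤
            C * ((∫ x, h₁ x ∂μ) ^ (pp / 2) + (∫ x, h₁ x ∂μ) ^ (pm / 2)) *
              ((∫ x, h₂ x ∂μ) ^ ((2 - pp) / 2) + (∫ x, h₂ x ∂μ) ^ ((2 - pm) / 2) +
                (∫ x, h₃ x ∂μ) ^ ((2 - pp) / 2) + (∫ x, h₃ x ∂μ) ^ ((2 - pm) / 2)) := by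
  refine ⟨2, two_pos, fun X _ μ p hp hpb h₁ h₂ h₃ hi₁ hi₂ hi₃ h₁0 h₂0 h₃0 => ?_⟩
  have hhalf : ∀ r : ℝ, (2 - r) / 2 = 1 - r / 2 := fun r => by ring
  simp only [hhalf]
  have hθm : 0 ≤ pm / 2 := by linarith
  have hθmp : pm / 2 ≤ pp / 2 := by linarith
  have hθp : pp / 2 ≤ 1 := by linarith
  have hθ : ∀ᵐ x ∂μ, pm / 2 ≤ p x / 2 ∧ p x / 2 ≤ pp / 2 :=
    hpb.mono fun x hx => ⟨by linarith [hx.1], by linarith [hx.2]⟩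
  have hθ01 : ∀ᵐ x ∂μ, 0 ≤ p x / 2 ∧ p x / 2 ≤ 1 :=
    hθ.mono fun x hx => ⟨by linarith [hx.1], by linarith [hx.2]⟩
  have hmeas : AEMeasurable (fun x => p x / 2) μ := hp.aemeasurable.div_const 2
  calc ∫ x, h₁ x ^ (p x / 2) * (h₂ x ^ (1 - p x / 2) + h₃ x ^ (1 - p x / 2)) ∂μ
      = (∫ x, h₁ x ^ (p x / 2) * h₂ x ^ (1 - p x / 2) ∂μ) +
          ∫ x, h₁ x ^ (p x / 2) * h₃ x ^ (1 - p x / 2) ∂μ := by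
        simp only [mul_add]
        exact integral_add
          (integrable_rpow_mul_rpow_one_sub hmeas hθ01 hi₁ hi₂ h₁0 h₂0)
          (integrable_rpow_mul_rpow_one_sub hmeas hθ01 hi₁ hi₃ h₁0 h₃0)
    _ ≤ _ := add_le_add
        (integral_rpow_mul_rpow_one_sub_le hθm hθmp hθp hθ hi₁ hi₂ h₁0 h₂0)
        (integral_rpow_mul_rpow_one_sub_le hθm hθmp hθp hθ hi₁ hi₃ h₁0 h₃0)
    _ = _ := by ring
end
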